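/- arXiv:1406.3405 — 2 statements merged into one kernel-verified Lean document; each statement's English description precedes it below -/
import Mathlib

section
/- Eliminating unit productions preserves minimum-cost derivations: given a weighted CFG, if A →^{k₁} B₁ →^{k₂} ... →^{k_{q-1}} B is a chain of unit productions and B →^{k_q} α is a non-unit production, then in the original grammar A derives α with cost Σᵢ kᵢ; conversely, every minimum-cost derivation of a terminal string from A in the grammar obtained by adding all such composed productions A →^{Σkᵢ} α and deleting all unit productions has the same cost as in the original grammar. -/
/-- Weighted derivation relation for a weighted CFG given by a production relation
`P A γ c` (the production `A →^c γ` has error count `c`). -/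
inductive Derives {N T : Type*} (P : N → List (N ⊕ T) → ℕ → Prop) :
    List (N ⊕ T) → List (N ⊕ T) → ℕ → Prop
  | refl (w : List (N ⊕ T)) : Derives P w w 0
  | step {α β γ w : List (N ⊕ T)} {A : N} {c₁ c₂ : ℕ} :
      P A γ c₂ → Derives P (α ++ γ ++ β) w c₁ →
      Derives P (α ++ [Sum.inl A] ++ β) w (c₁ + c₂)

/-- A right-hand side is a unit right-hand side if it is a single nonterminal. -/
def IsUnitRhs {N T : Type*} (rhs : List (N ⊕ T)) : Prop := ∃ B : N, rhs = [Sum.inl B]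

/-- A (possibly empty) chain of unit productions from `A` to `B` of total cost `c`. -/
inductive UnitChain {N T : Type*} (P : N → List (N ⊕ T) → ℕ → Prop) : N → N → ℕ → Prop
  | refl (A : N) : UnitChain P A A 0
  | step {A B C : N} {k c : ℕ} :
      P A [Sum.inl B] k → UnitChain P B C c → UnitChain P A C (k + c)

/-- The minimum cost of deriving the terminal string `w` from nonterminal `A`. -/
noncomputable def minCost {N T : Type*} (P : N → List (N ⊕ T) → ℕ → Prop)
    (A : N) (w : List T) : ℕ∞ :=
  sInf {c : ℕ∞ | ∃ m : ℕ, c = m ∧ Derives P [Sum.inl A] (w.map Sum.inr) m}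

section Aux
variable {N T : Type*} {P : N → List (N ⊕ T) → ℕ → Prop}

lemma Derives.cast {u u' v c c'} (h : Derives P u v c) (hu : u = u') (hc : c = c') :
    Derives P u' v c' := hu ▸ hc ▸ h

lemma Derives.trans {u v w c₁ c₂} (h₁ : Derives P u v c₁) (h₂ : Derives P v w c₂) :
    Derives P u w (c₁ + c₂) := by
  induction h₁ with
  | refl => simpa using h₂
  | step hp _ ih => exact (Derives.step hp (ih h₂)).cast rfl (by ring)

lemma Derives.context {u v c} (l r : List (N ⊕ T)) (h : Derives P u v c) :
    Derives P (l ++ u ++ r) (l ++ v ++ r) c := by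
  induction h with
  | refl => exact Derives.refl _
  | @step α β γ w A c₁ c₂ hp _ ih =>
      have := Derives.step (α := l ++ α) (β := β ++ r) hp (ih.cast (by simp) rfl)
      exact this.cast (by simp) rfl

lemma split3 {X : Type*} {l₁ l₂ l₃ l₄ : List X} {x y : X}
    (h : l₁ ++ [x] ++ l₂ = l₃ ++ [y] ++ l₄) :
    (l₁ = l₃ ∧ x = y ∧ l₂ = l₄) ∨
    (∃ l, l₃ = l₁ ++ [x] ++ l ∧ l₂ = l ++ [y] ++ l₄) ∨
    (∃ l, l₁ = l₃ ++ [y] ++ l ∧ l₄ = l ++ [x] ++ l₂) := by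
  have h' : (l₁ ++ [x]) ++ l₂ = (l₃ ++ [y]) ++ l₄ := by simpa using h
  rcases List.append_eq_append_iff.1 h' with ⟨a, ha1, ha2⟩ | ⟨a, ha1, ha2⟩
  · rcases a.eq_nil_or_concat with rfl | ⟨l, b, rfl⟩
    · obtain ⟨h1, h2⟩ := List.append_inj' (show l₁ ++ [x] = l₃ ++ [y] by simpa using ha1.symm) rfl
      left; exact ⟨h1, by simpa using h2, by simpa using ha2⟩
    · have : l₃ ++ [y] = (l₁ ++ [x] ++ l) ++ [b] := by
        rw [ha1]; simp
      obtain ⟨h1, h2⟩ := List.append_inj' this rfl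
      right; left
      refine ⟨l, h1, ?_⟩
      rw [ha2]
      simp at h2
      simp [h2]
  · rcases a.eq_nil_or_concat with rfl | ⟨l, b, rfl⟩
    · obtain ⟨h1, h2⟩ := List.append_inj' (show l₁ ++ [x] = l₃ ++ [y] by simpa using ha1) rfl
      left; exact ⟨h1, by simpa using h2, by simpa using ha2.symm⟩
    · have : l₁ ++ [x] = (l₃ ++ [y] ++ l) ++ [b] := by
        rw [ha1]; simp
      obtain ⟨h1, h2⟩ := List.append_inj' this rfl
      right; right
      refine ⟨l, h1, ?_⟩
      rw [ha2]
      simp at h2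
      simp [h2]

end Aux

section Main
variable {N T : Type*} {P : N → List (N ⊕ T) → ℕ → Prop}

/-- The unit-eliminated grammar. -/
def Qp (P : N → List (N ⊕ T) → ℕ → Prop) : N → List (N ⊕ T) → ℕ → Prop :=
  fun A' rhs c => ¬ IsUnitRhs rhs ∧
    ∃ (B : N) (c₁ c₂ : ℕ), UnitChain P A' B c₁ ∧ P B rhs c₂ ∧ c = c₁ + c₂

lemma chain_derives {A B : N} {c₁ : ℕ} {α : List (N ⊕ T)} {c₂ : ℕ}
    (hch : UnitChain P A B c₁) (hp : P B α c₂) :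
    Derives P [Sum.inl A] α (c₁ + c₂) := by
  induction hch with
  | refl A =>
      have := Derives.step (α := ([] : List (N ⊕ T))) (β := ([] : List (N ⊕ T))) hp
        ((Derives.refl α).cast (by simp) rfl)
      exact this.cast (by simp) (by ring)
  | @step A B' C k c hk _ ih =>
      have := Derives.step (α := ([] : List (N ⊕ T))) (β := ([] : List (N ⊕ T))) hk
        ((ih hp).cast (by simp) rfl)
      exact this.cast (by simp) (by ring)

/-- Q-derivations are simulated by P-derivations with the same cost. -/
lemma Q_to_P {u w : List (N ⊕ T)} {m : ℕ} (h : Derives (Qp P) u w m) :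
    Derives P u w m := by
  induction h with
  | refl => exact Derives.refl _
  | @step α β γ w A c₁ c₂ hq _ ih =>
      obtain ⟨-, B, d₁, d₂, hch, hp, rfl⟩ := hq
      have h1 : Derives P (α ++ [Sum.inl A] ++ β) (α ++ γ ++ β) (d₁ + d₂) :=
        Derives.context α β (chain_derives hch hp)
      exact (h1.trans ih).cast rfl (by ring)

/-- If a nonterminal occurrence can be replaced backwards along a unit production. -/
lemma replace_unit {u w : List (N ⊕ T)} {m : ℕ}
    (h : Derives (Qp P) u w m) (hw : ∀ C : N, Sum.inl C ∉ w) :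
    ∀ (a b : List (N ⊕ T)) (B A : N) (k : ℕ),
      u = a ++ [Sum.inl B] ++ b → P A [Sum.inl B] k →
      Derives (Qp P) (a ++ [Sum.inl A] ++ b) w (m + k) := by
  induction h with
  | refl v =>
      intro a b B A k he hp
      exact absurd (he ▸ (by simp : Sum.inl B ∈ a ++ [Sum.inl B] ++ b)) (hw B)
  | @step α β γ w A' c₁ c₂ hq hrest ih =>
      intro a b B A k he hp
      rcases split3 he with ⟨rfl, hAB, rfl⟩ | ⟨l, rfl, rfl⟩ | ⟨l, rfl, rfl⟩
      · -- the rewritten occurrence is ours: A' = B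
        obtain rfl : A' = B := by simpa using hAB
        obtain ⟨hnu, B₂, d₁, d₂, hch, hpr, rfl⟩ := hq
        have hq' : Qp P A γ (k + (d₁ + d₂)) :=
          ⟨hnu, B₂, k + d₁, d₂, UnitChain.step hp hch, hpr, by ring⟩
        exact (Derives.step hq' hrest).cast rfl (by ring)
      · -- occurrence of B is to the right of rewritten A'
        have ih' := ih hw (α ++ γ ++ l) b B A k (by simp) hp
        have := Derives.step (α := α) (β := l ++ [Sum.inl A] ++ b) hq
          (ih'.cast (by simp) rfl)
        exact this.cast (by simp) (by ring)
      · -- occurrence of B is to the left of rewritten A'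
        have ih' := ih hw a (l ++ γ ++ β) B A k (by simp) hp
        have := Derives.step (α := a ++ [Sum.inl A] ++ l) (β := β) hq
          (ih'.cast (by simp) rfl)
        exact this.cast (by simp) (by ring)

/-- P-derivations of terminal strings yield Q-derivations of at most the same cost. -/
lemma P_to_Q {u w : List (N ⊕ T)} {m : ℕ}
    (h : Derives P u w m) (hw : ∀ C : N, Sum.inl C ∉ w) :
    ∃ m' ≤ m, Derives (Qp P) u w m' := by
  induction h with
  | refl => exact ⟨0, le_refl _, Derives.refl _⟩
  | @step α β γ w A c₁ c₂ hp hrest ih =>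
      obtain ⟨m', hm', hd⟩ := ih hw
      by_cases hu : IsUnitRhs γ
      · obtain ⟨B, rfl⟩ := hu
        exact ⟨m' + c₂, by omega,
          replace_unit hd hw α β B A c₂ rfl hp⟩
      · have hq : Qp P A γ (0 + c₂) := ⟨hu, A, 0, c₂, UnitChain.refl A, hp, rfl⟩
        exact ⟨m' + (0 + c₂), by omega, Derives.step hq hd⟩

end Main

/-- Eliminating unit productions preserves minimum-cost derivations. If
`A →^{k₁} B₁ →^{k₂} ⋯ → B` is a chain of unit productions and `B →^{k_q} α` is a
non-unit production, then `A` derives `α` in the original grammar with the summed cost;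
and replacing the grammar by all composed non-unit productions (deleting all unit
productions) preserves the minimum derivation cost of every terminal string from every
nonterminal. -/
theorem unit_elimination_preserves_minCost {N T : Type*}
    (P : N → List (N ⊕ T) → ℕ → Prop)
    (hnoEps : ∀ (A : N) (c : ℕ), ¬ P A ([] : List (N ⊕ T)) c) :
    (∀ (A B : N) (c₁ : ℕ) (α : List (N ⊕ T)) (c₂ : ℕ),
      UnitChain P A B c₁ → P B α c₂ → ¬ IsUnitRhs α →
      Derives P [Sum.inl A] α (c₁ + c₂)) ∧
    (∀ (A : N) (w : List T),
      minCost (fun A' rhs c => ¬ IsUnitRhs rhs ∧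
        ∃ (B : N) (c₁ c₂ : ℕ), UnitChain P A' B c₁ ∧ P B rhs c₂ ∧ c = c₁ + c₂) A w
        = minCost P A w) := by
  constructor
  · intro A B c₁ α c₂ hch hp _
    exact chain_derives hch hp
  · intro A w
    show minCost (Qp P) A w = minCost P A w
    have hw : ∀ C : N, Sum.inl C ∉ w.map Sum.inr := by simp
    apply le_antisymm
    · apply le_sInf
      rintro c ⟨m, rfl, hd⟩
      obtain ⟨m', hm', hd'⟩ := P_to_Q hd hw
      calc sInf {c : ℕ∞ | ∃ m : ℕ, c = m ∧ Derives (Qp P) [Sum.inl A] (w.map Sum.inr) m}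
          ≤ (m' : ℕ∞) := sInf_le ⟨m', rfl, hd'⟩
        _ ≤ (m : ℕ∞) := by exact_mod_cast hm'
    · apply sInf_le_sInf
      rintro c ⟨m, rfl, hd⟩
      exact ⟨m, rfl, Q_to_P hd⟩
end

section
/- If a CFG G in CNF generates a nonempty language not containing ε, then for every string I over the terminal alphabet, the covering grammar G' (with insertion, deletion and substitution error productions) derives I; in particular the minimum total error count of a derivation of I from S in G' is a well-defined natural number at most |I| + minimum length of a string in L(G). -/
/-- Production relation of the base CNF grammar `G` (all costs `0`): binary rules
`R2 A B C` (i.e. `A → BC`) and terminal rules `R1 A a` (i.e. `A → a`). -/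
def baseProds {N T : Type*} (R2 : N → N → N → Prop) (R1 : N → T → Prop) :
    N → List (N ⊕ T) → ℕ → Prop := fun A rhs c =>
  c = 0 ∧ ((∃ B C : N, rhs = [Sum.inl B, Sum.inl C] ∧ R2 A B C) ∨
    (∃ a : T, rhs = [Sum.inr a] ∧ R1 A a))

/-- Nonterminals of the covering grammar: the original ones plus `H` and `I`. -/
inductive Cov (N : Type*) : Type _
  | orig (A : N) | H | I

open Cov in
/-- Production relation of the covering grammar `G'`: the (cost-`0`) productions of `G`
together with the error productions `H →⁰ HI`, `H →⁰ I`, `I →¹ a` for all `a ∈ T`, and,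
for each `(A → a) ∈ P`: `A →¹ b` for `b ≠ a`, `A →¹ ε`, `A →⁰ AH`, `A →⁰ HA`. -/
def covProds {N T : Type*} (R2 : N → N → N → Prop) (R1 : N → T → Prop) :
    Cov N → List (Cov N ⊕ T) → ℕ → Prop := fun X rhs c =>
  (∃ A B C : N, X = orig A ∧ rhs = [Sum.inl (orig B), Sum.inl (orig C)] ∧ R2 A B C ∧ c = 0) ∨
  (∃ (A : N) (a : T), X = orig A ∧ rhs = [Sum.inr a] ∧ R1 A a ∧ c = 0) ∨
  (X = H ∧ rhs = [Sum.inl H, Sum.inl I] ∧ c = 0) ∨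
  (X = H ∧ rhs = [Sum.inl I] ∧ c = 0) ∨
  (∃ a : T, X = I ∧ rhs = [Sum.inr a] ∧ c = 1) ∨
  (∃ (A : N) (a b : T), X = orig A ∧ R1 A a ∧ b ≠ a ∧ rhs = [Sum.inr b] ∧ c = 1) ∨
  (∃ (A : N) (a : T), X = orig A ∧ R1 A a ∧ rhs = [] ∧ c = 1) ∨
  (∃ (A : N) (a : T), X = orig A ∧ R1 A a ∧ rhs = [Sum.inl (orig A), Sum.inl H] ∧ c = 0) ∨
  (∃ (A : N) (a : T), X = orig A ∧ R1 A a ∧ rhs = [Sum.inl H, Sum.inl (orig A)] ∧ c = 0)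

/-!
Take a shortest word `u ∈ L(G)` together with a derivation tree for it, and replay the tree in
`G'`: the word `w` is pushed entirely into the rightmost leaf `A → a`, and every other leaf
is erased by `A →¹ ε`. The rightmost leaf produces the first letter of `w` by `A →⁰ a` or
`A →¹ b` and the remaining letters through `A →⁰ AH`, `H ⇒* I⋯I`, `I →¹ b`. Each of the
`|u|` leaves costs at most one error besides the `|w| - 1` insertions, so the total cost
is at most `|w| + |u|`.
-/

namespace Derives

variable {N T : Type*} {P : N → List (N ⊕ T) → ℕ → Prop}

theorem single {A : N} {γ : List (N ⊕ T)} {c : ℕ} (hp : P A γ c) :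
    Derives P [Sum.inl A] γ c := by
  have h : Derives P ([] ++ γ ++ []) γ 0 := by simpa using Derives.refl γ
  simpa using Derives.step hp h

theorem trans_s19 {x y z : List (N ⊕ T)} {c₁ c₂ : ℕ}
    (h₁ : Derives P x y c₁) (h₂ : Derives P y z c₂) : Derives P x z (c₁ + c₂) := by
  induction h₁ with
  | refl => simpa using h₂
  | step hp _ ih => exact Nat.add_right_comm _ _ _ ▸ Derives.step hp (ih h₂)

theorem append_context {x y : List (N ⊕ T)} {c : ℕ} (l r : List (N ⊕ T))
    (h : Derives P x y c) : Derives P (l ++ x ++ r) (l ++ y ++ r) c := by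
  induction h with
  | refl => exact Derives.refl _
  | @step α β γ w A c₁ _ hp _ ih =>
      have h' : Derives P ((l ++ α) ++ γ ++ (β ++ r)) (l ++ w ++ r) c₁ := by
        simpa only [List.append_assoc] using ih
      simpa only [List.append_assoc] using Derives.step hp h'

theorem append_left {x y : List (N ⊕ T)} {c : ℕ} (l : List (N ⊕ T))
    (h : Derives P x y c) : Derives P (l ++ x) (l ++ y) c := by
  simpa using h.append_context l []

theorem append_right {x y : List (N ⊕ T)} {c : ℕ} (r : List (N ⊕ T))
    (h : Derives P x y c) : Derives P (x ++ r) (y ++ r) c := by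
  simpa using h.append_context [] r

end Derives

section Trees

variable {N T : Type*} (R2 : N → N → N → Prop) (R1 : N → T → Prop)

/-- Derivation trees of the CNF grammar. -/
inductive Gen : N → List T → Prop
  | leaf {A : N} {a : T} : R1 A a → Gen A [a]
  | node {A B C : N} {u v : List T} :
      R2 A B C → Gen B u → Gen C v → Gen A (u ++ v)

/-- Forests of derivation trees, one for each nonterminal of a sentential form. -/
inductive GenF : List (N ⊕ T) → List T → Prop
  | nil : GenF [] []
  | terminal {a : T} {rest : List (N ⊕ T)} {v : List T} :
      GenF rest v → GenF (Sum.inr a :: rest) (a :: v)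
  | tree {A : N} {rest : List (N ⊕ T)} {u v : List T} :
      Gen R2 R1 A u → GenF rest v → GenF (Sum.inl A :: rest) (u ++ v)

variable {R2 R1}

theorem GenF.map_inr (u : List T) : GenF R2 R1 (u.map Sum.inr) u := by
  induction u with
  | nil => exact GenF.nil
  | cons _ _ ih => exact GenF.terminal ih

theorem GenF.append {x y : List (N ⊕ T)} {u v : List T}
    (hx : GenF R2 R1 x u) (hy : GenF R2 R1 y v) : GenF R2 R1 (x ++ y) (u ++ v) := by
  induction hx with
  | nil => simpa using hy
  | terminal _ ih => exact GenF.terminal ih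
  | tree hA _ ih => simpa only [List.cons_append, List.append_assoc] using GenF.tree hA ih

theorem GenF.split {x y : List (N ⊕ T)} {w : List T} (h : GenF R2 R1 (x ++ y) w) :
    ∃ u v, w = u ++ v ∧ GenF R2 R1 x u ∧ GenF R2 R1 y v := by
  induction x generalizing w with
  | nil => exact ⟨[], w, rfl, GenF.nil, h⟩
  | cons s x ih =>
      cases h with
      | terminal h' =>
          obtain ⟨u, v, rfl, hu, hv⟩ := ih h'
          exact ⟨_ :: u, v, rfl, GenF.terminal hu, hv⟩
      | tree hA h' =>
          obtain ⟨u, v, rfl, hu, hv⟩ := ih h'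
          exact ⟨_ ++ u, v, (List.append_assoc _ _ _).symm, GenF.tree hA hu, hv⟩

theorem Gen.of_baseProds {A : N} {γ : List (N ⊕ T)} {c : ℕ} {u : List T}
    (hp : baseProds R2 R1 A γ c) (h : GenF R2 R1 γ u) : Gen R2 R1 A u := by
  obtain ⟨-, ⟨B, C, rfl, hR2⟩ | ⟨a, rfl, hR1⟩⟩ := hp
  · obtain _ | _ | ⟨hB, _ | _ | ⟨hC, _ | _⟩⟩ := h
    simpa using Gen.node hR2 hB hC
  · obtain _ | ⟨_ | _⟩ := h
    exact Gen.leaf hR1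

theorem GenF.of_derives {α : List (N ⊕ T)} {u : List T} {c : ℕ}
    (h : Derives (baseProds R2 R1) α (u.map Sum.inr) c) : GenF R2 R1 α u := by
  generalize hz : u.map Sum.inr = z at h
  induction h generalizing u with
  | refl => exact hz ▸ GenF.map_inr u
  | step hp _ ih =>
      obtain ⟨u₁, v, rfl, h₁, hv⟩ := GenF.split (List.append_assoc _ _ _ ▸ ih hz)
      obtain ⟨u₂, u₃, rfl, h₂, h₃⟩ := GenF.split hv
      rw [List.append_assoc]
      exact h₁.append (GenF.tree (Gen.of_baseProds hp h₂) h₃)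

theorem Gen.of_derives {A : N} {u : List T} {c : ℕ}
    (h : Derives (baseProds R2 R1) [Sum.inl A] (u.map Sum.inr) c) : Gen R2 R1 A u := by
  cases GenF.of_derives h with
  | tree hA hnil => cases hnil; simpa using hA

end Trees

section Covering

open Cov

variable {N T : Type*} {R2 : N → N → N → Prop} {R1 : N → T → Prop}

theorem covProds_binary {A B C : N} (h : R2 A B C) :
    covProds R2 R1 (orig A) [Sum.inl (orig B), Sum.inl (orig C)] 0 :=
  Or.inl ⟨A, B, C, rfl, rfl, h, rfl⟩

theorem covProds_terminal {A : N} {a : T} (h : R1 A a) :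
    covProds R2 R1 (orig A) [Sum.inr a] 0 :=
  Or.inr <| Or.inl ⟨A, a, rfl, rfl, h, rfl⟩

theorem covProds_H_HI : covProds R2 R1 H [Sum.inl H, Sum.inl I] 0 :=
  Or.inr <| Or.inr <| Or.inl ⟨rfl, rfl, rfl⟩

theorem covProds_H_I : covProds R2 R1 H [Sum.inl I] 0 :=
  Or.inr <| Or.inr <| Or.inr <| Or.inl ⟨rfl, rfl, rfl⟩

theorem covProds_I (b : T) : covProds R2 R1 I [Sum.inr b] 1 :=
  Or.inr <| Or.inr <| Or.inr <| Or.inr <| Or.inl ⟨b, rfl, rfl, rfl⟩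

theorem covProds_substitute {A : N} {a b : T} (h : R1 A a) (hb : b ≠ a) :
    covProds R2 R1 (orig A) [Sum.inr b] 1 :=
  Or.inr <| Or.inr <| Or.inr <| Or.inr <| Or.inr <| Or.inl ⟨A, a, b, rfl, h, hb, rfl, rfl⟩

theorem covProds_delete {A : N} {a : T} (h : R1 A a) : covProds R2 R1 (orig A) [] 1 :=
  Or.inr <| Or.inr <| Or.inr <| Or.inr <| Or.inr <| Or.inr <| Or.inl ⟨A, a, rfl, h, rfl, rfl⟩

theorem covProds_insert_right {A : N} {a : T} (h : R1 A a) :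
    covProds R2 R1 (orig A) [Sum.inl (orig A), Sum.inl H] 0 :=
  Or.inr <| Or.inr <| Or.inr <| Or.inr <| Or.inr <| Or.inr <| Or.inr <| Or.inl
    ⟨A, a, rfl, h, rfl, rfl⟩

theorem derives_H (v : List T) (hv : v ≠ []) :
    Derives (covProds R2 R1) [Sum.inl (H : Cov N)] (v.map Sum.inr) v.length := by
  induction v using List.reverseRecOn with
  | nil => exact absurd rfl hv
  | append_singleton ys b ih =>
      have hI := Derives.single (covProds_I (N := N) (R2 := R2) (R1 := R1) b)
      rcases eq_or_ne ys [] with rfl | hys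
      · simpa using (Derives.single covProds_H_I).trans_s19 hI
      · have hd := (Derives.single covProds_H_HI).trans_s19
          (((ih hys).append_right [Sum.inl I]).trans_s19 (hI.append_left (ys.map Sum.inr)))
        simpa using hd

theorem exists_derives_singleton_of_R1 {A : N} {a : T} (h : R1 A a) (b : T) :
    ∃ c ≤ 1, Derives (covProds R2 R1) [Sum.inl (orig A)] [Sum.inr b] c := by
  rcases eq_or_ne b a with rfl | hb
  · exact ⟨0, zero_le_one, Derives.single (covProds_terminal h)⟩
  · exact ⟨1, le_rfl, Derives.single (covProds_substitute h hb)⟩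

theorem exists_derives_of_R1 {A : N} {a : T} (h : R1 A a) (v : List T) :
    ∃ c ≤ v.length + 1, Derives (covProds R2 R1) [Sum.inl (orig A)] (v.map Sum.inr) c := by
  rcases v with _ | ⟨b, rest⟩
  · exact ⟨1, by simp, Derives.single (covProds_delete h)⟩
  obtain ⟨c, hc, hb⟩ := exists_derives_singleton_of_R1 (R2 := R2) h b
  rcases eq_or_ne rest [] with rfl | hrest
  · exact ⟨c, by simp only [List.length_cons, List.length_nil]; omega, hb⟩
  have hd := (Derives.single (covProds_insert_right h)).trans_s19
    ((hb.append_right [Sum.inl H]).trans_s19 ((derives_H rest hrest).append_left [Sum.inr b]))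
  exact ⟨0 + c + rest.length, by simp only [List.length_cons]; omega, by simpa [Nat.add_assoc] using hd⟩

theorem Gen.exists_covDerives {A : N} {u : List T} (h : Gen R2 R1 A u) (w : List T) :
    ∃ c ≤ w.length + u.length,
      Derives (covProds R2 R1) [Sum.inl (orig A)] (w.map Sum.inr) c := by
  induction h generalizing w with
  | leaf hR1 => simpa using exists_derives_of_R1 hR1 w
  | @node A B C u v hR2 _ _ ihB ihC =>
      obtain ⟨cB, hcB, dB⟩ := ihB []
      obtain ⟨cC, hcC, dC⟩ := ihC w
      have hd := (Derives.single (covProds_binary (R1 := R1) hR2)).trans_s19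
        ((dB.append_right [Sum.inl (orig C)]).trans_s19 dC)
      refine ⟨0 + cB + cC, ?_, by simpa using hd⟩
      simp only [List.length_nil, List.length_append] at hcB ⊢
      omega

end Covering

theorem covering_grammar_derives_everything_general {N T : Type*}
    (R2 : N → N → N → Prop) (R1 : N → T → Prop) (S : N)
    (hne : ∃ u : List T, Derives (baseProds R2 R1) [Sum.inl S] (u.map Sum.inr) 0) :
    ∀ w : List T,
      (∃ c : ℕ, Derives (covProds R2 R1) [Sum.inl (Cov.orig S)] (w.map Sum.inr) c) ∧
      sInf {c : ℕ∞ | ∃ m : ℕ, c = m ∧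
          Derives (covProds R2 R1) [Sum.inl (Cov.orig S)] (w.map Sum.inr) m}
        ≤ (w.length : ℕ∞) + sInf {c : ℕ∞ | ∃ u : List T,
            Derives (baseProds R2 R1) [Sum.inl S] (u.map Sum.inr) 0 ∧ c = (u.length : ℕ∞)} := by
  intro w
  set L := {c : ℕ∞ | ∃ u : List T,
    Derives (baseProds R2 R1) [Sum.inl S] (u.map Sum.inr) 0 ∧ c = (u.length : ℕ∞)}
  obtain ⟨u, hu⟩ := hne
  obtain ⟨u₀, hu₀, hmin⟩ : sInf L ∈ L := csInf_mem ⟨_, u, hu, rfl⟩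
  obtain ⟨c, hc, hd⟩ := (Gen.of_derives hu₀).exists_covDerives w
  refine ⟨⟨c, hd⟩, le_trans (b := (c : ℕ∞)) (sInf_le ⟨c, rfl, hd⟩) ?_⟩
  rw [hmin]
  exact_mod_cast hc

/-- If a CFG `G` in CNF generates a nonempty language not containing `ε`, then for every
string `I` over the terminal alphabet the covering grammar `G'` derives `I`, and the
minimum total error count of such a derivation is at most
`|I| +` (the minimum length of a string of `L(G)`). -/
theorem covering_grammar_derives_everything {N T : Type*}
    (R2 : N → N → N → Prop) (R1 : N → T → Prop) (S : N)
    (hne : ∃ u : List T, Derives (baseProds R2 R1) [Sum.inl S] (u.map Sum.inr) 0)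
    (heps : ¬ Derives (baseProds R2 R1) [Sum.inl S] ([] : List (N ⊕ T)) 0) :
    ∀ w : List T,
      (∃ c : ℕ, Derives (covProds R2 R1) [Sum.inl (Cov.orig S)] (w.map Sum.inr) c) ∧
      sInf {c : ℕ∞ | ∃ m : ℕ, c = m ∧
          Derives (covProds R2 R1) [Sum.inl (Cov.orig S)] (w.map Sum.inr) m}
        ≤ (w.length : ℕ∞) + sInf {c : ℕ∞ | ∃ u : List T,
            Derives (baseProds R2 R1) [Sum.inl S] (u.map Sum.inr) 0 ∧ c = (u.length : ℕ∞)} :=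
  covering_grammar_derives_everything_general R2 R1 S hne
end
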